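/- Let α ≥ 1, β ≥ 1 and m ≥ 1 be integers, let n ≥ 1, let S_n have the Pólya–Eggenberger urn mass function p(k) = C(n,k) (α/m)_k (β/m)_{n−k} / (α/m + β/m)_n on {0,1,…,n}, set W_n = S_n/n, and let Z have the Beta distribution B(α/m, β/m). Then with h(x) = x(1−x) for x ∈ [0,1] and h(x) = 0 otherwise (a 1-Lipschitz function), |E h(W_n) − E h(Z)| = (1/n) · αβ/((α+β+m)(α+β)); consequently d_W(W_n, Z) ≥ αβ/( n(α+β+m)(α+β) ), so the O(1/n) rate of the Wasserstein approximation cannot be improved. -/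

import Mathlib

/-
With `a = α/m`, `b = β/m`, the weights `C(n,k) (a)_k (b)_{n-k}` sum to `(a+b)_n`
(Chu–Vandermonde for rising factorials). Since `(a)_k = a (a+1)_{k-1}`, the same identity at
`(a+1, b+1)` gives the factorial moment `E[S_n (n - S_n)] = n (n-1) a b / ((a+b)(a+b+1))`, so
`E h(W_n) = (1 - 1/n) c` with `c = a b / ((a+b)(a+b+1)) = αβ / ((α+β+m)(α+β))`. The Beta
integral gives `E h(Z) = B(a+1,b+1)/B(a,b) = c` exactly, so the gap is exactly `c/n`.
The test function is the parabola `x (1-x)`, of slope at most `1` on `[0,1]`, composed with the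
projection onto `[0,1]`, hence `1`-Lipschitz.
-/

open MeasureTheory

/-- The rising factorial `(x)_k = x (x+1) ⋯ (x+k-1)`, with `(x)_0 = 1`. -/
noncomputable def risingFac (x : ℝ) : ℕ → ℝ
  | 0 => 1
  | k + 1 => risingFac x k * (x + k)

/-- The Pólya–Eggenberger urn mass function
`p n k = C(n,k) (α/m)_k (β/m)_{n-k} / (α/m + β/m)_n` on `{0,1,…,n}`. -/
noncomputable def urnPmf (α β m n k : ℕ) : ℝ :=
  (n.choose k : ℝ) * risingFac ((α : ℝ) / m) k * risingFac ((β : ℝ) / m) (n - k)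
    / risingFac ((α : ℝ) / m + (β : ℝ) / m) n

/-- Expectation `E h(Z)` for `Z ∼ B(a,b)`, the Beta distribution with density
`x^{a-1} (1-x)^{b-1} / B(a,b)` on `[0,1]`, where `B(a,b) = Γ(a)Γ(b)/Γ(a+b)`. -/
noncomputable def betaExp (a b : ℝ) (h : ℝ → ℝ) : ℝ :=
  ∫ x in Set.Ioo (0 : ℝ) 1,
    (Real.Gamma (a + b) / (Real.Gamma a * Real.Gamma b))
      * x ^ (a - 1) * (1 - x) ^ (b - 1) * h x

open Finset

theorem risingFac_succ_left (x : ℝ) (k : ℕ) :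
    risingFac x (k + 1) = x * risingFac (x + 1) k := by
  induction k with
  | zero => simp [risingFac]
  | succ k ih =>
    rw [risingFac, ih, risingFac]
    push_cast
    ring

theorem risingFac_pos {x : ℝ} (hx : 0 < x) (k : ℕ) : 0 < risingFac x k := by
  induction k with
  | zero => simp [risingFac]
  | succ k ih => exact mul_pos ih (by positivity)

theorem risingFac_add (a b : ℝ) (n : ℕ) :
    risingFac (a + b) n
      = ∑ ij ∈ antidiagonal n, (n.choose ij.1 : ℝ) * (risingFac a ij.1 * risingFac b ij.2) := by
  induction n with
  | zero => simp [risingFac]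
  | succ n ih =>
    rw [sum_antidiagonal_choose_succ_mul (fun i j => risingFac a i * risingFac b j), risingFac,
      ih, sum_mul, ← sum_add_distrib]
    refine sum_congr rfl fun ij hij => ?_
    rw [HasAntidiagonal.mem_antidiagonal] at hij
    rw [← Nat.choose_symm_of_eq_add hij.symm]
    simp only [risingFac]
    rw [← hij]
    push_cast
    ring

theorem cast_succ_mul_succ_mul_choose {K : Type*} [Field K] [CharZero K] (i j : ℕ) :
    ((i + 1 : ℕ) : K) * (j + 1 : ℕ) * ((i + 1 + (j + 1)).choose (i + 1) : K)
      = (i + j + 2) * (i + j + 1) * ((i + j).choose i : K) := by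
  have hi : (i.factorial : K) ≠ 0 := Nat.cast_ne_zero.2 i.factorial_ne_zero
  have hj : (j.factorial : K) ≠ 0 := Nat.cast_ne_zero.2 j.factorial_ne_zero
  have hi1 : (i : K) + 1 ≠ 0 := Nat.cast_add_one_ne_zero i
  have hj1 : (j : K) + 1 ≠ 0 := Nat.cast_add_one_ne_zero j
  rw [Nat.cast_add_choose, Nat.cast_add_choose, show i + 1 + (j + 1) = (i + j + 1) + 1 by ring]
  push_cast [Nat.factorial_succ]
  field_simp
  ring

theorem sum_antidiagonal_mul_choose_mul_risingFac (a b : ℝ) (n : ℕ) :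
    ∑ ij ∈ antidiagonal (n + 2), ((ij.1 : ℝ) * ij.2)
        * ((n + 2).choose ij.1 * (risingFac a ij.1 * risingFac b ij.2))
      = (n + 2) * (n + 1) * a * b * risingFac (a + b + 2) n := by
  rw [Nat.sum_antidiagonal_succ, Nat.sum_antidiagonal_succ',
    show a + b + 2 = (a + 1) + (b + 1) by ring, risingFac_add, mul_sum]
  simp only [Nat.cast_zero, zero_mul, mul_zero, zero_add]
  refine sum_congr rfl fun ij hij => ?_
  rw [HasAntidiagonal.mem_antidiagonal] at hij
  subst hij
  rw [show ij.1 + ij.2 + 1 + 1 = ij.1 + 1 + (ij.2 + 1) by ring, risingFac_succ_left,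
    risingFac_succ_left]
  have := cast_succ_mul_succ_mul_choose (K := ℝ) ij.1 ij.2
  push_cast at this ⊢
  linear_combination (a * b * risingFac (a + 1) ij.1 * risingFac (b + 1) ij.2) * this

theorem sum_choose_mul_risingFac_div_mul_sub {a b : ℝ} (hab : 0 < a + b) (n : ℕ) :
    ∑ k ∈ range (n + 1),
        (n.choose k : ℝ) * risingFac a k * risingFac b (n - k) / risingFac (a + b) n
          * (k * (n - k))
      = n * (n - 1) * (a * b / ((a + b) * (a + b + 1))) := by
  rcases n with _ | _ | n
  · simp
  · simp [sum_range_succ]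
  have hpos : 0 < risingFac (a + b + 2) n := risingFac_pos (by linarith) n
  calc _ = (∑ ij ∈ antidiagonal (n + 2), ((ij.1 : ℝ) * ij.2)
        * ((n + 2).choose ij.1 * (risingFac a ij.1 * risingFac b ij.2)))
          / risingFac (a + b) (n + 2) := by
        rw [Nat.sum_antidiagonal_eq_sum_range_succ_mk, sum_div]
        refine sum_congr rfl fun k hk => ?_
        rw [Nat.cast_sub (mem_range_succ_iff.1 hk)]
        ring
    _ = (n + 2) * (n + 1) * a * b * risingFac (a + b + 2) n
          / ((a + b) * ((a + b + 1) * risingFac (a + b + 2) n)) := by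
        rw [sum_antidiagonal_mul_choose_mul_risingFac, risingFac_succ_left, risingFac_succ_left,
          add_assoc (a + b) 1 1, one_add_one_eq_two]
    _ = _ := by
        field_simp
        push_cast
        ring

theorem sum_urnPmf_mul_mul_sub {α β m : ℕ} (hαβ : 0 < α + β) (hm : 0 < m) (n : ℕ) :
    ∑ k ∈ range (n + 1), urnPmf α β m n k * (k * (n - k))
      = n * (n - 1) * (α * β / ((α + β + m) * (α + β))) := by
  have hαβ' : (0 : ℝ) < α + β := by exact_mod_cast hαβ
  have hm' : (0 : ℝ) < m := by exact_mod_cast hm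
  unfold urnPmf
  rw [sum_choose_mul_risingFac_div_mul_sub (by rw [← add_div]; positivity)]
  field_simp

noncomputable def parabolaBump : ℝ → ℝ := (Set.Icc 0 1).indicator fun x => x * (1 - x)

theorem lipschitzWith_parabolaBump : LipschitzWith 1 parabolaBump := by
  have hg : LipschitzOnWith 1 (fun y : ℝ => y * (1 - y)) (Set.Icc 0 1) := by
    refine LipschitzOnWith.of_dist_le_mul fun x hx y hy => ?_
    simp only [Real.dist_eq, NNReal.coe_one, one_mul]
    rw [show x * (1 - x) - y * (1 - y) = (x - y) * (1 - x - y) by ring, abs_mul]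
    refine mul_le_of_le_one_right (abs_nonneg _) (abs_le.2 ⟨?_, ?_⟩) <;>
      linarith [hx.1, hx.2, hy.1, hy.2]
  -- the parabola vanishes at both endpoints, so the indicator is its extension by clamping
  have hextend : parabolaBump
      = Set.IccExtend zero_le_one ((Set.Icc 0 1).domRestrict fun y : ℝ => y * (1 - y)) := by
    funext x
    by_cases hx : x ∈ Set.Icc (0 : ℝ) 1
    · rw [parabolaBump, Set.indicator_of_mem hx, Set.IccExtend_of_mem _ _ hx]
      rfl
    · rw [parabolaBump, Set.indicator_of_notMem hx]
      rcases le_or_gt x 0 with h0 | h0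
      · simp [Set.IccExtend_of_le_left _ _ h0]
      · simp [Set.IccExtend_of_right_le _ _ (le_of_lt (not_le.1 fun h1 => hx ⟨h0.le, h1⟩))]
  rw [hextend]
  simpa [Set.IccExtend] using hg.to_restrict.comp (LipschitzWith.projIcc (zero_le_one' ℝ))

theorem sum_urnPmf_mul_parabolaBump {α β m n : ℕ} (hαβ : 0 < α + β) (hm : 0 < m) (hn : 0 < n) :
    ∑ k ∈ range (n + 1), urnPmf α β m n k * parabolaBump (k / n)
      = (n - 1) / n * (α * β / ((α + β + m) * (α + β))) := by
  have hn' : (0 : ℝ) < n := by exact_mod_cast hn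
  calc _ = (∑ k ∈ range (n + 1), urnPmf α β m n k * (k * (n - k))) / n ^ 2 := by
        rw [sum_div]
        refine sum_congr rfl fun k hk => ?_
        have hk : (k : ℝ) ≤ n := by exact_mod_cast mem_range_succ_iff.1 hk
        rw [parabolaBump, Set.indicator_of_mem (show (k : ℝ) / n ∈ Set.Icc 0 1 from
          ⟨by positivity, div_le_one_of_le₀ hk hn'.le⟩)]
        field_simp
    _ = _ := by
        rw [sum_urnPmf_mul_mul_sub hαβ hm]
        field_simp

theorem integral_Ioo_rpow_mul_one_sub_rpow {u v : ℝ} (hu : 0 < u) (hv : 0 < v) :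
    ∫ x in Set.Ioo (0 : ℝ) 1, x ^ (u - 1) * (1 - x) ^ (v - 1)
      = Real.Gamma u * Real.Gamma v / Real.Gamma (u + v) := by
  have hcomplex : Complex.betaIntegral u v
      = ((∫ x in (0 : ℝ)..1, x ^ (u - 1) * (1 - x) ^ (v - 1) : ℝ) : ℂ) := by
    rw [Complex.betaIntegral, ← intervalIntegral.integral_ofReal]
    refine intervalIntegral.integral_congr fun x hx => ?_
    rw [Set.uIcc_of_le zero_le_one, Set.mem_Icc] at hx
    push_cast
    rw [Complex.ofReal_cpow hx.1, Complex.ofReal_cpow (by linarith [hx.2])]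
    push_cast
    rfl
  have hG := Complex.Gamma_mul_Gamma_eq_betaIntegral
    (s := (u : ℂ)) (t := (v : ℂ)) (by simpa using hu) (by simpa using hv)
  rw [hcomplex, ← Complex.ofReal_add, Complex.Gamma_ofReal, Complex.Gamma_ofReal,
    Complex.Gamma_ofReal] at hG
  norm_cast at hG
  rw [intervalIntegral.integral_of_le zero_le_one, integral_Ioc_eq_integral_Ioo] at hG
  rw [hG, mul_div_cancel_left₀ _ (Real.Gamma_pos_of_pos (add_pos hu hv)).ne']

theorem betaExp_parabolaBump {a b : ℝ} (ha : 0 < a) (hb : 0 < b) :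
    betaExp a b parabolaBump = a * b / ((a + b) * (a + b + 1)) := by
  set C := Real.Gamma (a + b) / (Real.Gamma a * Real.Gamma b)
  have hintegrand : Set.EqOn
      (fun x : ℝ => C * x ^ (a - 1) * (1 - x) ^ (b - 1) * parabolaBump x)
      (fun x : ℝ => C * (x ^ ((a + 1) - 1) * (1 - x) ^ ((b + 1) - 1)))
      (Set.Ioo 0 1) := by
    intro x hx
    obtain ⟨hx0, hx1⟩ := hx
    have hx1' : 0 < 1 - x := sub_pos.2 hx1
    simp only [add_sub_cancel_right, parabolaBump,
      Set.indicator_of_mem (Set.Ioo_subset_Icc_self ⟨hx0, hx1⟩), Real.rpow_sub_one hx0.ne',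
      Real.rpow_sub_one hx1'.ne']
    field_simp
  rw [betaExp, setIntegral_congr_fun measurableSet_Ioo hintegrand, integral_const_mul,
    integral_Ioo_rpow_mul_one_sub_rpow (by linarith) (by linarith),
    show a + 1 + (b + 1) = (a + b) + 1 + 1 by ring, Real.Gamma_add_one ha.ne',
    Real.Gamma_add_one hb.ne', Real.Gamma_add_one (by positivity),
    Real.Gamma_add_one (by positivity)]
  have := Real.Gamma_pos_of_pos ha
  have := Real.Gamma_pos_of_pos hb
  have := Real.Gamma_pos_of_pos (add_pos ha hb)
  simp only [C]
  field_simp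

/-- With `S_n` the number of white balls drawn from the
Pólya–Eggenberger urn, `W_n = S_n/n`, `Z ∼ B(α/m, β/m)`, and
`h(x) = x(1-x)` on `[0,1]`, `h = 0` otherwise: `h` is `1`-Lipschitz,
`|E h(W_n) - E h(Z)| = (1/n) αβ/((α+β+m)(α+β))`, and consequently
`d_W(W_n, Z) ≥ αβ/(n(α+β+m)(α+β))` (there is a `1`-Lipschitz test function
attaining at least this value), so the `O(1/n)` rate cannot be improved. -/
theorem stmt_11 (α β m : ℕ) (hα : 1 ≤ α) (hβ : 1 ≤ β) (hm : 1 ≤ m)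
    (n : ℕ) (hn : 1 ≤ n)
    (h : ℝ → ℝ)
    (hdef : ∀ x : ℝ, h x = if x ∈ Set.Icc (0 : ℝ) 1 then x * (1 - x) else 0) :
    LipschitzWith 1 h ∧
    |∑ k ∈ Finset.range (n + 1), urnPmf α β m n k * h ((k : ℝ) / n)
        - betaExp ((α : ℝ) / m) ((β : ℝ) / m) h|
      = (1 / (n : ℝ)) * ((α : ℝ) * β / (((α : ℝ) + β + m) * ((α : ℝ) + β))) ∧
    (∃ h₀ : ℝ → ℝ, LipschitzWith 1 h₀ ∧
      (α : ℝ) * β / ((n : ℝ) * ((α : ℝ) + β + m) * ((α : ℝ) + β))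
        ≤ |∑ k ∈ Finset.range (n + 1), urnPmf α β m n k * h₀ ((k : ℝ) / n)
            - betaExp ((α : ℝ) / m) ((β : ℝ) / m) h₀|) := by
  obtain rfl : h = parabolaBump := funext fun x => by rw [hdef, parabolaBump, Set.indicator_apply]
  have hα0 : (0 : ℝ) < α := by exact_mod_cast hα
  have hβ0 : (0 : ℝ) < β := by exact_mod_cast hβ
  have hm0 : (0 : ℝ) < m := by exact_mod_cast hm
  have hn0 : (0 : ℝ) < n := by exact_mod_cast hn
  have hdiff : ∑ k ∈ range (n + 1), urnPmf α β m n k * parabolaBump (k / n)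
      - betaExp (α / m) (β / m) parabolaBump
      = -(1 / n * (α * β / ((α + β + m) * (α + β)))) := by
    rw [sum_urnPmf_mul_parabolaBump (by omega) (by omega) (by omega),
      betaExp_parabolaBump (by positivity) (by positivity)]
    field_simp
    ring
  have hgap := (congrArg abs hdiff).trans ((abs_neg _).trans (abs_of_nonneg (by positivity)))
  refine ⟨lipschitzWith_parabolaBump, hgap, _, lipschitzWith_parabolaBump, le_of_eq ?_⟩
  rw [hgap]
  field_simp
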